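/- For every graph G and every path P, π*(G ⊠ P) ≤ 4·π*(G). -/

import Mathlib

/-- A *lazy walk* in `G` is a sequence of vertices in which any two consecutive vertices
are equal or adjacent. -/
def SimpleGraph.IsLazyWalk {V : Type*} (G : SimpleGraph V) (l : List V) : Prop :=
  l.Chain' fun a b => a = b ∨ G.Adj a b

/-- A colouring `φ` of `G` is *strongly nonrepetitive* if every `φ`-repetitive lazy walk
`v₀, …, v₂ₖ₋₁` (with `k ≥ 1`, repetitive meaning the first half of the colour sequence
equals the second half) has `vᵢ = vᵢ₊ₖ` for some `i < k`. -/
def SimpleGraph.IsStronglyNonrepetitiveColouring {V α : Type*} (G : SimpleGraph V)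
    (φ : V → α) : Prop :=
  ∀ (l : List V) (k : ℕ), G.IsLazyWalk l → 0 < k → l.length = 2 * k →
    (l.map φ).take k = (l.map φ).drop k → ∃ i < k, l[i]? = l[i + k]?

/-- `π*(G)`: the least `n` such that `G` has a strongly nonrepetitive colouring with
`n` colours. -/
noncomputable def SimpleGraph.strongNonrepChromNum {V : Type*} (G : SimpleGraph V) : ℕ :=
  sInf {n : ℕ | ∃ φ : V → Fin n, G.IsStronglyNonrepetitiveColouring φ}

/-- The strong product `G ⊠ H`: distinct vertices `(v, x)` and `(w, y)` are adjacent iff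
(`v = w` or `vw ∈ E(G)`) and (`x = y` or `xy ∈ E(H)`). -/
def SimpleGraph.strongProd {α β : Type*} (G : SimpleGraph α) (H : SimpleGraph β) :
    SimpleGraph (α × β) where
  Adj x y := x ≠ y ∧ (x.1 = y.1 ∨ G.Adj x.1 y.1) ∧ (x.2 = y.2 ∨ H.Adj x.2 y.2)
  symm := by
    constructor
    rintro x y ⟨h1, h2, h3⟩
    refine ⟨h1.symm, ?_, ?_⟩
    · rcases h2 with h | h
      exacts [Or.inl h.symm, Or.inr h.symm]
    · rcases h3 with h | h
      exacts [Or.inl h.symm, Or.inr h.symm]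
  loopless := by constructor; rintro x ⟨h1, -, -⟩; exact h1 rfl

/-!
Colour `(v, q)` by `(φ v, ψ q)`, where `φ` is an optimal strongly nonrepetitive colouring of `G`
and `ψ` is a `4`-colouring of the path for which every `ψ`-repetitive lazy walk is boring, i.e.
repeats its first half exactly. A repetitive lazy walk in `G ⊠ P` projects to a boring walk in `P`
and to a `φ`-repetitive lazy walk in `G`, whose coincidence `vᵢ = vᵢ₊ₖ` is then one of the walk
in `G ⊠ P`.

For `ψ` take a square-free ternary word (comparisons of consecutive Thue–Morse letters) with a
fourth letter inserted at every third position. Equal `ψ`-colours lie at distance at least `3`, so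
one coincidence of a `ψ`-repetitive lazy walk on `ℕ` spreads along the whole walk, and a stall or
backtrack in one half is mirrored in the other half, where both can be cut out. After all cuts
both halves are monotone, and a repetitive walk with monotone halves and no coincidence would
exhibit a square of `ψ`.
-/

def IsSquareFreeWord {α : Type*} (w : ℕ → α) : Prop :=
  ∀ p m, 0 < m → ¬ ∀ j < m, w (p + j) = w (p + j + m)

def IsOverlapFreeWord {α : Type*} (w : ℕ → α) : Prop :=
  ∀ p m, 0 < m → ¬ ∀ j ≤ m, w (p + j) = w (p + j + m)

def thueMorse (n : ℕ) : Bool :=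
  if h : n = 0 then false else (n % 2 == 1) ^^ thueMorse (n / 2)
decreasing_by exact Nat.div_lt_self (Nat.pos_of_ne_zero h) one_lt_two

theorem thueMorse_zero : thueMorse 0 = false := by
  rw [thueMorse]; rfl

theorem thueMorse_eq_xor (n : ℕ) : thueMorse n = ((n % 2 == 1) ^^ thueMorse (n / 2)) := by
  rcases Nat.eq_zero_or_pos n with rfl | hn
  · simp [thueMorse_zero]
  · rw [thueMorse, dif_neg hn.ne']

theorem thueMorse_eq_iff_div_two {a b : ℕ} (h : a % 2 = b % 2) :
    thueMorse a = thueMorse b ↔ thueMorse (a / 2) = thueMorse (b / 2) := by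
  rw [thueMorse_eq_xor a, thueMorse_eq_xor b, h]
  cases b % 2 == 1 <;> simp

theorem thueMorse_two_mul_ne (i : ℕ) : thueMorse (2 * i) ≠ thueMorse (2 * i + 1) := by
  rw [thueMorse_eq_xor (2 * i), thueMorse_eq_xor (2 * i + 1)]
  simp [Nat.mul_add_div]

theorem Bool.eq_iff_even_of_alternating {w : ℕ → Bool} {p m : ℕ}
    (halt : ∀ j < m, w (p + j) ≠ w (p + j + 1)) : w (p + m) = w p ↔ Even m := by
  induction m with
  | zero => simp
  | succ m ih =>
    have hm := halt m (by omega)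
    rw [← add_assoc, Nat.even_add_one, ← ih fun j hj => halt j (by omega)]
    revert hm; cases w (p + m) <;> cases w (p + m + 1) <;> cases w p <;> simp

/-- An overlap of odd period would force the word to alternate over a whole period, because
`thueMorse (2 * i) ≠ thueMorse (2 * i + 1)`; an overlap of even period halves. -/
theorem isOverlapFreeWord_thueMorse : IsOverlapFreeWord thueMorse := by
  intro p m
  induction m using Nat.strong_induction_on generalizing p with
  | _ m ih =>
    intro hm hover
    rcases Nat.even_or_odd' m with ⟨h, rfl | rfl⟩
    · refine ih h (by omega) (p / 2) (by omega) fun j hj => ?_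
      have := (thueMorse_eq_iff_div_two (by omega)).1 (hover (2 * j) (by omega))
      rwa [show (p + 2 * j) / 2 = p / 2 + j by omega,
        show (p + 2 * j + 2 * h) / 2 = p / 2 + j + h by omega] at this
    · have halt : ∀ j < 2 * h + 1, thueMorse (p + j) ≠ thueMorse (p + j + 1) := by
        intro j hj
        rcases Nat.even_or_odd' (p + j) with ⟨i, hi | hi⟩
        · rw [hi]; exact thueMorse_two_mul_ne i
        · rw [hover j hj.le, show p + j + 1 = p + (j + 1) by omega, hover (j + 1) (by omega),
            show p + j + (2 * h + 1) = 2 * (i + h + 1) by omega,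
            show p + (j + 1) + (2 * h + 1) = 2 * (i + h + 1) + 1 by omega]
          exact thueMorse_two_mul_ne _
      have := (Bool.eq_iff_even_of_alternating halt).1 (by simpa using (hover 0 (by omega)).symm)
      exact Nat.not_even_two_mul_add_one h this

theorem Bool.compare_eq_compare_iff {a b c d : Bool} :
    compare a b = compare c d ↔ (a = c ∧ b = d) ∨ (a = b ∧ c = d) := by
  revert a b c d; decide

/-- A square of comparisons lifts to an overlap unless the word is constant across a period. -/
theorem IsOverlapFreeWord.isSquareFreeWord_compare {w : ℕ → Bool} (hw : IsOverlapFreeWord w) :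
    IsSquareFreeWord fun n => compare (w n) (w (n + 1)) := by
  intro p m hm hsq
  have hstep : ∀ j < m, (w (p + j) = w (p + j + m) ∧ w (p + j + 1) = w (p + j + m + 1)) ∨
      (w (p + j) = w (p + j + 1) ∧ w (p + j + m) = w (p + j + m + 1)) := fun j hj =>
    Bool.compare_eq_compare_iff.1 (hsq j hj)
  by_cases h0 : w p = w (p + m)
  · refine hw p m hm fun j hj => ?_
    induction j with
    | zero => simpa using h0
    | succ j ih =>
      rw [← add_assoc, show p + j + 1 + m = p + j + m + 1 by omega]
      rcases hstep j (by omega) with h | h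
      · exact h.2
      · rw [← h.1, ← h.2]; exact ih (by omega)
  · have hconst : ∀ j ≤ m, w (p + j) = w p ∧ w (p + j) ≠ w (p + j + m) := by
      intro j hj
      induction j with
      | zero => simpa using h0
      | succ j ih =>
        rw [← add_assoc, show p + j + 1 + m = p + j + m + 1 by omega]
        rcases hstep j (by omega) with h | h
        · exact absurd h.1 (ih (by omega)).2
        · rw [← h.1, ← h.2]; exact ih (by omega)
    exact h0 (hconst m le_rfl).1.symm

theorem isSquareFreeWord_compare_thueMorse :
    IsSquareFreeWord fun n => compare (thueMorse n) (thueMorse (n + 1)) :=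
  isOverlapFreeWord_thueMorse.isSquareFreeWord_compare

/-- The word `none, w 0, w 1, none, w 2, w 3, none, …`. -/
def insertSeparators {β : Type*} (w : ℕ → β) (q : ℕ) : Option β :=
  if q % 3 = 0 then none else some (w (2 * (q / 3) + (q % 3 - 1)))

section insertSeparators

variable {β : Type*} {w : ℕ → β}

theorem insertSeparators_eq_none_iff {q : ℕ} : insertSeparators w q = none ↔ q % 3 = 0 := by
  unfold insertSeparators; split_ifs <;> simp_all

theorem insertSeparators_of_mod_ne_zero {q : ℕ} (hq : q % 3 ≠ 0) :
    insertSeparators w q = some (w (2 * (q / 3) + (q % 3 - 1))) :=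
  if_neg hq

theorem IsSquareFreeWord.ne_succ (hw : IsSquareFreeWord w) (i : ℕ) : w i ≠ w (i + 1) :=
  fun h => hw i 1 one_pos fun j hj => by simpa [Nat.lt_one_iff.1 hj] using h

theorem IsSquareFreeWord.insertSeparators_ne (hw : IsSquareFreeWord w) {a b : ℕ} (hab : a < b)
    (hb : b ≤ a + 2) : insertSeparators w a ≠ insertSeparators w b := by
  intro h
  by_cases ha : a % 3 = 0
  · rw [insertSeparators_eq_none_iff.2 ha, eq_comm, insertSeparators_eq_none_iff] at h
    omega
  have hb3 : b % 3 ≠ 0 := fun hb3 => by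
    rw [insertSeparators_eq_none_iff.2 hb3, insertSeparators_eq_none_iff] at h
    exact ha h
  rw [insertSeparators_of_mod_ne_zero ha, insertSeparators_of_mod_ne_zero hb3,
    show 2 * (b / 3) + (b % 3 - 1) = 2 * (a / 3) + (a % 3 - 1) + 1 by omega] at h
  exact hw.ne_succ _ (Option.some.inj h)

theorem IsSquareFreeWord.eq_of_insertSeparators_eq (hw : IsSquareFreeWord w) {a b : ℕ}
    (h : insertSeparators w a = insertSeparators w b) (hab : a ≤ b + 2) (hba : b ≤ a + 2) :
    a = b := by
  rcases lt_trichotomy a b with hlt | heq | hgt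
  · exact absurd h (hw.insertSeparators_ne hlt hba)
  · exact heq
  · exact absurd h.symm (hw.insertSeparators_ne hgt hab)

/-- A square of `insertSeparators w` has period divisible by `3`, as the separators must match up;
its letters from `w` then form a square of `w` of two thirds the period. -/
theorem IsSquareFreeWord.insertSeparators (hw : IsSquareFreeWord w) :
    IsSquareFreeWord (insertSeparators w) := by
  intro p m hm hsq
  have h3 : 3 ≤ m := by
    by_contra hlt
    exact absurd (hw.eq_of_insertSeparators_eq (hsq 0 hm) (by omega) (by omega)) (by omega)
  obtain ⟨h, rfl⟩ : 3 ∣ m := by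
    have hsep := hsq ((3 - p % 3) % 3) (by omega)
    rw [insertSeparators_eq_none_iff.2 (by omega), eq_comm, insertSeparators_eq_none_iff] at hsep
    omega
  refine hw (2 * (p / 3) + p % 3 / 2) (2 * h) (by omega) fun s hs => ?_
  set i := 2 * (p / 3) + p % 3 / 2 + s
  have hi := hsq (3 * (i / 2) + i % 2 + 1 - p) (by omega)
  rw [show p + (3 * (i / 2) + i % 2 + 1 - p) = 3 * (i / 2) + i % 2 + 1 by omega,
    insertSeparators_of_mod_ne_zero (by omega), insertSeparators_of_mod_ne_zero (by omega)] at hi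
  convert Option.some.inj hi using 2 <;> omega

end insertSeparators

theorem Nat.forall_eq_add_or_forall_add_eq {f : ℕ → ℕ} {n : ℕ}
    (hstep : ∀ t, t + 1 < n → f (t + 1) = f t + 1 ∨ f t = f (t + 1) + 1)
    (hback : ∀ t, t + 2 < n → f (t + 2) ≠ f t) :
    (∀ t < n, f t = f 0 + t) ∨ (∀ t < n, f t + t = f 0) := by
  suffices ∀ t, t < n → (∀ s ≤ t, f s = f 0 + s) ∨ (∀ s ≤ t, f s + s = f 0) by
    rcases Nat.eq_zero_or_pos n with rfl | hn
    · simp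
    · rcases this (n - 1) (by omega) with h | h
      exacts [.inl fun t ht => h t (by omega), .inr fun t ht => h t (by omega)]
  intro t
  induction t with
  | zero => intro _; left; intro s hs; simp [Nat.le_zero.1 hs]
  | succ t ih =>
    intro ht
    have hb : 0 < t → f (t + 1) ≠ f (t - 1) := fun h => by
      simpa [show t - 1 + 2 = t + 1 by omega] using hback (t - 1) (by omega)
    rcases ih (by omega) with h | h <;> rcases hstep t ht with hs | hs
    · exact .inl fun s hs' => by rcases Nat.le_succ_iff.1 hs' with h' | rfl <;> grind
    · rcases Nat.eq_zero_or_pos t with rfl | h0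
      · rw [zero_add] at hs
        exact .inr fun s hs' => by interval_cases s <;> omega
      · exact absurd (by grind) (hb h0)
    · rcases Nat.eq_zero_or_pos t with rfl | h0
      · rw [zero_add] at hs
        exact .inl fun s hs' => by interval_cases s <;> omega
      · exact absurd (by grind) (hb h0)
    · exact .inr fun s hs' => by rcases Nat.le_succ_iff.1 hs' with h' | rfl <;> grind

/-- Only the values `x 0, …, x (2 * k - 1)` matter. -/
structure IsRepetitiveLazySeq {α : Type*} (c : ℕ → α) (k : ℕ) (x : ℕ → ℕ) : Prop where
  lazy : ∀ t, t + 1 < 2 * k → x (t + 1) ≤ x t + 1 ∧ x t ≤ x (t + 1) + 1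
  rep : ∀ t < k, c (x t) = c (x (t + k))

/-- Skipping the steps `t + 1, …, t + r` of the first half and the matching steps of the second
half of a sequence of length `2 * k`. -/
def cutIndex (k t r s : ℕ) : ℕ :=
  if s ≤ t then s else if s ≤ t + (k - r) then s + r else s + 2 * r

theorem cutIndex_lt {k t r s : ℕ} (ht : t + r < k) (hs : s < k - r) : cutIndex k t r s < k := by
  simp only [cutIndex]; split_ifs <;> omega

theorem cutIndex_add_sub {k t r s : ℕ} (ht : t + r < k) (hs : s < k - r) :
    cutIndex k t r (s + (k - r)) = cutIndex k t r s + k := by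
  simp only [cutIndex]; split_ifs <;> omega

namespace IsRepetitiveLazySeq

variable {α : Type*} {c : ℕ → α} {k : ℕ} {x : ℕ → ℕ}

theorem dist_le (hx : IsRepetitiveLazySeq c k x) {t r : ℕ} (h : t + r < 2 * k) :
    x (t + r) ≤ x t + r ∧ x t ≤ x (t + r) + r := by
  induction r with
  | zero => simp
  | succ r ih =>
    have := hx.lazy (t + r) (by omega)
    have := ih (by omega)
    rw [← add_assoc]; omega

theorem cut (hx : IsRepetitiveLazySeq c k x) {t r : ℕ} (ht : t + r < k)
    (h₁ : x (t + r) = x t) (h₂ : x (t + k + r) = x (t + k)) :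
    IsRepetitiveLazySeq c (k - r) (x ∘ cutIndex k t r) where
  lazy s hs := by
    have hg : cutIndex k t r (s + 1) = cutIndex k t r s + 1 ∨
        cutIndex k t r (s + 1) = cutIndex k t r s + r + 1 ∧
          x (cutIndex k t r s + r) = x (cutIndex k t r s) := by
      by_cases hst : s = t
      · subst hst; right; simp only [cutIndex]; split_ifs <;> omega
      by_cases hsk : s = t + (k - r)
      · subst hsk; right; simp only [cutIndex]
        rw [show t + (k - r) + r = t + k by omega]; split_ifs <;> omega
      left; simp only [cutIndex]; split_ifs <;> omega
    have hlt : cutIndex k t r (s + 1) < 2 * k := by simp only [cutIndex]; split_ifs <;> omega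
    simp only [Function.comp]
    rcases hg with hg | ⟨hg, hs'⟩
    · rw [hg] at hlt ⊢; exact hx.lazy _ hlt
    · rw [hg] at hlt ⊢; rw [← hs']; exact hx.lazy _ hlt
  rep s hs := by
    simp only [Function.comp, cutIndex_add_sub ht hs]
    exact hx.rep _ (cutIndex_lt ht hs)

theorem exists_eq_of_cut {t r : ℕ} (ht : t + r < k)
    (h : ∃ s < k - r, (x ∘ cutIndex k t r) s = (x ∘ cutIndex k t r) (s + (k - r))) :
    ∃ s < k, x s = x (s + k) := by
  obtain ⟨s, hs, heq⟩ := h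
  simp only [Function.comp, cutIndex_add_sub ht hs] at heq
  exact ⟨_, cutIndex_lt ht hs, heq⟩

section Separated

variable (hsep : ∀ ⦃a b⦄, c a = c b → a ≤ b + 2 → b ≤ a + 2 → a = b)
include hsep

theorem eq_iff_succ_eq (hx : IsRepetitiveLazySeq c k x) {t : ℕ} (ht : t + 1 < k) :
    x t = x (t + k) ↔ x (t + 1) = x (t + 1 + k) := by
  have h1 := hx.lazy t (by omega)
  have h2 := hx.lazy (t + k) (by omega)
  rw [show t + k + 1 = t + 1 + k by omega] at h2
  constructor <;> intro h
  · exact hsep (hx.rep (t + 1) ht) (by omega) (by omega)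
  · exact hsep (hx.rep t (by omega)) (by omega) (by omega)

theorem forall_eq_of_eq (hx : IsRepetitiveLazySeq c k x) {t₀ : ℕ} (ht₀ : t₀ < k)
    (h₀ : x t₀ = x (t₀ + k)) : ∀ t < k, x t = x (t + k) := by
  have key : ∀ t < k, (x t = x (t + k) ↔ x 0 = x k) := by
    intro t ht
    induction t with
    | zero => simp
    | succ t ih => rw [← hx.eq_iff_succ_eq hsep ht, ih (by omega)]
  exact fun t ht => (key t ht).2 ((key t₀ ht₀).1 h₀)

theorem revisit_iff (hx : IsRepetitiveLazySeq c k x) {t r : ℕ} (hr : r ≤ 2) (ht : t + r < k) :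
    x (t + r) = x t ↔ x (t + k + r) = x (t + k) := by
  have h1 := hx.dist_le (t := t) (r := r) (by omega)
  have h2 := hx.dist_le (t := t + k) (r := r) (by omega)
  have c1 := hx.rep (t + r) ht
  have c2 := hx.rep t (by omega)
  rw [show t + r + k = t + k + r by omega] at c1
  constructor <;> intro h
  · exact hsep (by rw [← c1, ← c2, h]) (by omega) (by omega)
  · exact hsep (by rw [c1, c2, h]) (by omega) (by omega)

theorem gap_of_forall_ne (hx : IsRepetitiveLazySeq c k x) (hk : 0 < k)
    (hne : ∀ t < k, x t ≠ x (t + k)) :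
    (∀ t < k, x t + 3 ≤ x (t + k)) ∨ (∀ t < k, x (t + k) + 3 ≤ x t) := by
  have hgap : ∀ t < k, x t + 3 ≤ x (t + k) ∨ x (t + k) + 3 ≤ x t := fun t ht => by
    by_contra h
    exact hne t ht (hsep (hx.rep t ht) (by omega) (by omega))
  have hsame : ∀ t, t + 1 < k →
      (x t + 3 ≤ x (t + k) ↔ x (t + 1) + 3 ≤ x (t + 1 + k)) := by
    intro t ht
    have h1 := hx.lazy t (by omega)
    have h2 := hx.lazy (t + k) (by omega)
    rw [show t + k + 1 = t + 1 + k by omega] at h2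
    rcases hgap t (by omega) with h | h <;> rcases hgap (t + 1) ht with h' | h' <;> omega
  have key : ∀ t < k, (x t + 3 ≤ x (t + k) ↔ x 0 + 3 ≤ x k) := by
    intro t ht
    induction t with
    | zero => simp
    | succ t ih => rw [← hsame t ht, ih (by omega)]
  rcases hgap 0 hk with h | h
  · exact .inl fun t ht => (key t ht).2 (by simpa using h)
  · exact .inr fun t ht => by
      rcases hgap t ht with h' | h'
      · exact absurd ((key t ht).1 h') (by simp at h; omega)
      · exact h'

theorem false_of_monotone (hsq : IsSquareFreeWord c) (hx : IsRepetitiveLazySeq c k x)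
    (hk : 0 < k) (hne : ∀ t < k, x t ≠ x (t + k))
    (h₁ : (∀ t < k, x t = x 0 + t) ∨ (∀ t < k, x t + t = x 0))
    (h₂ : (∀ t < k, x (t + k) = x k + t) ∨ (∀ t < k, x (t + k) + t = x k)) : False := by
  have hmid := hx.lazy (k - 1) (by omega)
  rw [show k - 1 + 1 = k by omega] at hmid
  -- The gap at `0` and `k - 1`, read against the step from `k - 1` to `k`, leaves only the cases
  -- where both halves move the way the gap points; they form a square of period `|x k - x 0| ≤ k`.
  rcases hx.gap_of_forall_ne hsep hk hne with S | S <;>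
    have s₀ := S 0 hk <;> have s₁ := S (k - 1) (by omega) <;> rw [zero_add] at s₀ <;>
    rcases h₁ with U | U <;> have u := U (k - 1) (by omega) <;>
    rcases h₂ with W | W <;> have w := W (k - 1) (by omega)
  all_goals first | omega | skip
  · refine hsq (x 0) (x k - x 0) (by omega) fun j hj => ?_
    rw [show x 0 + j + (x k - x 0) = x k + j by omega, ← U j (by omega), ← W j (by omega)]
    exact hx.rep j (by omega)
  · refine hsq (x k + 1 - (x 0 - x k)) (x 0 - x k) (by omega) fun j hj => ?_
    have u := U (x 0 - x k - 1 - j) (by omega)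
    have w := W (x 0 - x k - 1 - j) (by omega)
    convert (hx.rep (x 0 - x k - 1 - j) (by omega)).symm using 2 <;> omega

theorem exists_eq (hsq : IsSquareFreeWord c) {k : ℕ} (hk : 0 < k) {x : ℕ → ℕ}
    (hx : IsRepetitiveLazySeq c k x) : ∃ t < k, x t = x (t + k) := by
  induction k using Nat.strong_induction_on generalizing x with
  | _ k ih =>
  by_cases hcut : ∃ r t, 0 < r ∧ r ≤ 2 ∧ t + r < k ∧ x (t + r) = x t
  · obtain ⟨r, t, hr, hr₂, ht, h₁⟩ := hcut
    have h₂ := (hx.revisit_iff hsep hr₂ ht).1 h₁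
    exact exists_eq_of_cut ht (ih (k - r) (by omega) (by omega) (hx.cut ht h₁ h₂))
  push Not at hcut
  by_contra! hne
  refine hx.false_of_monotone hsep hsq hk hne (Nat.forall_eq_add_or_forall_add_eq ?_ ?_) ?_
  · intro t ht
    have := hx.lazy t (by omega)
    have := hcut 1 t one_pos one_le_two ht
    omega
  · exact fun t ht => hcut 2 t two_pos le_rfl ht
  · simpa using Nat.forall_eq_add_or_forall_add_eq (f := fun t => x (t + k))
      (fun t ht => by
        have := hx.lazy (t + k) (by omega)
        have := mt (hx.revisit_iff hsep one_le_two ht).2 (hcut 1 t one_pos one_le_two ht)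
        rw [show t + 1 + k = t + k + 1 by omega]
        omega)
      (fun t ht => by
        rw [show t + 2 + k = t + k + 2 by omega]
        exact mt (hx.revisit_iff hsep le_rfl ht).2 (hcut 2 t two_pos le_rfl ht))

end Separated

end IsRepetitiveLazySeq

theorem List.take_eq_drop_iff {α : Type*} {L : List α} {k : ℕ} (hlen : L.length = 2 * k) :
    L.take k = L.drop k ↔ ∀ i < k, L[i]? = L[i + k]? := by
  constructor
  · intro h i hi
    simpa [List.getElem?_take, hi, List.getElem?_drop, add_comm k] using congrArg (·[i]?) h
  · intro h
    refine List.ext_getElem? fun i => ?_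
    by_cases hi : i < k
    · simpa [List.getElem?_take, hi, List.getElem?_drop, add_comm k] using h i hi
    · rw [List.getElem?_eq_none (by simp; omega), List.getElem?_eq_none (by simp; omega)]

theorem List.map_take_eq_map_drop {α β : Type*} {L : List α} {k : ℕ} (f : α → β)
    (h : L.take k = L.drop k) : (L.map f).take k = (L.map f).drop k := by
  rw [← List.map_take, ← List.map_drop, h]

namespace SimpleGraph

variable {V W α β : Type*} {G : SimpleGraph V} {H : SimpleGraph W}

theorem IsLazyWalk.map {f : V → W} (hf : ∀ a b, G.Adj a b → f a = f b ∨ H.Adj (f a) (f b))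
    {l : List V} (hl : G.IsLazyWalk l) : H.IsLazyWalk (l.map f) := by
  unfold IsLazyWalk at *
  rw [List.Chain', List.isChain_map]
  exact hl.imp fun a b h => h.elim (fun h => .inl (congrArg f h)) (hf a b)

theorem IsLazyWalk.getElem {l : List V} (hl : G.IsLazyWalk l) {i : ℕ} (hi : i + 1 < l.length) :
    l[i] = l[i + 1] ∨ G.Adj l[i] l[i + 1] :=
  List.isChain_iff_getElem.1 hl i hi

theorem IsStronglyNonrepetitiveColouring.comp_injective {φ : V → α}
    (hφ : G.IsStronglyNonrepetitiveColouring φ) {f : α → β} (hf : Function.Injective f) :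
    G.IsStronglyNonrepetitiveColouring (f ∘ φ) := by
  intro l k hl hk hlen hrep
  refine hφ l k hl hk hlen (List.map_injective_iff.2 hf ?_)
  simpa only [List.map_take, List.map_drop, List.map_map] using hrep

theorem isStronglyNonrepetitiveColouring_of_injective {φ : V → α}
    (hφ : Function.Injective φ) :
    G.IsStronglyNonrepetitiveColouring φ := by
  intro l k _ hk hlen hrep
  have h₀ := ((List.take_eq_drop_iff (by simpa using hlen)).1 hrep 0 hk)
  simp only [List.getElem?_map] at h₀
  exact ⟨0, hk, Option.map_injective hφ h₀⟩

theorem strongNonrepChromNum_le_card [Fintype α] {φ : V → α}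
    (hφ : G.IsStronglyNonrepetitiveColouring φ) :
    G.strongNonrepChromNum ≤ Fintype.card α :=
  Nat.sInf_le ⟨Fintype.equivFin α ∘ φ, hφ.comp_injective (Fintype.equivFin α).injective⟩

theorem exists_isStronglyNonrepetitiveColouring_fin_strongNonrepChromNum [Finite V]
    (G : SimpleGraph V) :
    ∃ φ : V → Fin G.strongNonrepChromNum, G.IsStronglyNonrepetitiveColouring φ := by
  have := Fintype.ofFinite V
  exact Nat.sInf_mem (s := {n | ∃ φ : V → Fin n, G.IsStronglyNonrepetitiveColouring φ})
    ⟨_, _, isStronglyNonrepetitiveColouring_of_injective (Fintype.equivFin V).injective⟩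

/-- Every repetitive lazy walk is *boring*: its second half repeats its first half. -/
def IsBoringColouring (G : SimpleGraph V) (φ : V → α) : Prop :=
  ∀ (l : List V) (k : ℕ), G.IsLazyWalk l → l.length = 2 * k →
    (l.map φ).take k = (l.map φ).drop k → l.take k = l.drop k

theorem IsBoringColouring.comp_hom {ψ : W → α} (hψ : H.IsBoringColouring ψ) (f : G →g H)
    (hf : Function.Injective f) : G.IsBoringColouring (ψ ∘ f) := by
  intro l k hl hlen hrep
  refine List.map_injective_iff.2 hf ?_
  simp only [List.map_take, List.map_drop]
  exact hψ _ k (hl.map fun _ _ h => .inr (f.map_adj h)) (by simpa using hlen)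
    (by simpa only [List.map_map] using hrep)

theorem IsStronglyNonrepetitiveColouring.strongProd {φ : V → α} {ψ : W → β}
    (hφ : G.IsStronglyNonrepetitiveColouring φ) (hψ : H.IsBoringColouring ψ) :
    (G.strongProd H).IsStronglyNonrepetitiveColouring fun p => (φ p.1, ψ p.2) := by
  intro l k hl hk hlen hrep
  obtain ⟨i, hi, h₁⟩ := hφ (l.map Prod.fst) k
    (hl.map fun _ _ (h : (G.strongProd H).Adj _ _) => h.2.1) hk (by simpa using hlen)
    (by simpa only [List.map_map, Function.comp_def] using List.map_take_eq_map_drop Prod.fst hrep)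
  have h₂ := hψ (l.map Prod.snd) k
    (hl.map fun _ _ (h : (G.strongProd H).Adj _ _) => h.2.2) (by simpa using hlen)
    (by simpa only [List.map_map, Function.comp_def] using List.map_take_eq_map_drop Prod.snd hrep)
  have h₂ := (List.take_eq_drop_iff (by simpa using hlen)).1 h₂ i hi
  refine ⟨i, hi, ?_⟩
  rw [List.getElem?_map, List.getElem?_map, List.getElem?_eq_getElem (by omega),
    List.getElem?_eq_getElem (by omega)] at h₁ h₂
  rw [List.getElem?_eq_getElem (by omega), List.getElem?_eq_getElem (by omega)]
  exact congrArg some (Prod.ext (Option.some.inj h₁) (Option.some.inj h₂))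

theorem isBoringColouring_hasse_nat {c : ℕ → α}
    (hsep : ∀ ⦃a b⦄, c a = c b → a ≤ b + 2 → b ≤ a + 2 → a = b)
    (hsq : IsSquareFreeWord c) : (hasse ℕ).IsBoringColouring c := by
  intro l k hl hlen hrep
  rcases Nat.eq_zero_or_pos k with rfl | hk
  · rw [List.eq_nil_of_length_eq_zero hlen]; rfl
  have hget : ∀ t < 2 * k, l[t]? = some (l.getD t 0) := fun t ht => by
    rw [List.getD_eq_getElem _ _ (show t < l.length by omega), List.getElem?_eq_getElem]
  have hx : IsRepetitiveLazySeq c k (l.getD · 0) := by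
    refine ⟨fun t ht => ?_, fun t ht => ?_⟩
    · rw [List.getD_eq_getElem _ _ (show t < l.length by omega),
        List.getD_eq_getElem _ _ (show t + 1 < l.length by omega)]
      rcases hl.getElem (show t + 1 < l.length by omega) with h | h
      · rw [h]; omega
      · rw [hasse_adj, Nat.covBy_iff_add_one_eq, Nat.covBy_iff_add_one_eq] at h; omega
    · have := (List.take_eq_drop_iff (by simpa using hlen)).1 hrep t ht
      rwa [List.getElem?_map, List.getElem?_map, hget t (by omega), hget (t + k) (by omega),
        Option.map_some, Option.map_some, Option.some_inj] at this
  obtain ⟨t₀, ht₀, h₀⟩ := hx.exists_eq hsep hsq hk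
  refine (List.take_eq_drop_iff hlen).2 fun t ht => ?_
  rw [hget t (by omega), hget (t + k) (by omega), hx.forall_eq_of_eq hsep ht₀ h₀ t ht]

end SimpleGraph

def pathColouring : ℕ → Option Ordering :=
  insertSeparators fun n => compare (thueMorse n) (thueMorse (n + 1))

theorem isBoringColouring_pathGraph_pathColouring (n : ℕ) :
    (SimpleGraph.pathGraph n).IsBoringColouring (pathColouring ∘ Fin.val) :=
  (SimpleGraph.isBoringColouring_hasse_nat
    (fun _ _ h => isSquareFreeWord_compare_thueMorse.eq_of_insertSeparators_eq h)
    isSquareFreeWord_compare_thueMorse.insertSeparators).comp_hom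
    ⟨Fin.val, fun h => by simpa [SimpleGraph.pathGraph_adj, Nat.covBy_iff_add_one_eq] using h⟩
    Fin.val_injective

/-- **Corollary 7.** For every graph `G` and every path `P`, `π*(G ⊠ P) ≤ 4 · π*(G)`. -/
theorem strongNonrepChromNum_strongProd_pathGraph_le (V : Type) [Fintype V]
    (G : SimpleGraph V) (n : ℕ) :
    (G.strongProd (SimpleGraph.pathGraph n)).strongNonrepChromNum ≤
      4 * G.strongNonrepChromNum := by
  obtain ⟨φ, hφ⟩ := G.exists_isStronglyNonrepetitiveColouring_fin_strongNonrepChromNum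
  calc _ ≤ Fintype.card (Fin G.strongNonrepChromNum × Option Ordering) :=
        SimpleGraph.strongNonrepChromNum_le_card
          (hφ.strongProd (isBoringColouring_pathGraph_pathColouring n))
    _ = 4 * G.strongNonrepChromNum := by
        rw [Fintype.card_prod, Fintype.card_fin, Fintype.card_option,
          show Fintype.card Ordering = 3 from rfl, mul_comm]
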